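/- The PPL-difference sequence d_pf of the paperfolding word u_pf is 2-automatic: the 2-kernel of d_pf is a finite set. -/

import Mathlib

/-- Prefix `u[0..n-1]` of the infinite word `u`. -/
def wordPrefix {A : Type*} (u : ℕ → A) (n : ℕ) : List A :=
  List.ofFn (fun i : Fin n => u i)

/-- Factor `u[i..i+ℓ-1]` of the infinite word `u`. -/
def wordFactor {A : Type*} (u : ℕ → A) (i ℓ : ℕ) : List A :=
  List.ofFn (fun j : Fin ℓ => u (i + j))

/-- A palindrome is a word equal to its reversal. -/
def IsPalindrome {A : Type*} (w : List A) : Prop := w.reverse = w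

/-- `w` is a concatenation of `k` nonempty palindromes. -/
def IsPalConcat {A : Type*} (w : List A) (k : ℕ) : Prop :=
  ∃ ps : List (List A), ps.length = k ∧ (∀ p ∈ ps, p ≠ [] ∧ IsPalindrome p) ∧ ps.flatten = w

/-- Prefix palindromic length: the least number of nonempty palindromes whose
concatenation is the prefix of length `n` of `u` (`PPL u 0 = 0`). -/
noncomputable def PPL {A : Type*} (u : ℕ → A) (n : ℕ) : ℕ :=
  sInf {k | IsPalConcat (wordPrefix u n) k}

/-- The PPL-difference sequence `d_u(n) = PPL_u(n+1) - PPL_u(n)`. -/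
noncomputable def PPLdiff {A : Type*} (u : ℕ → A) (n : ℕ) : ℤ :=
  (PPL u (n + 1) : ℤ) - (PPL u n : ℤ)

/-- The `k`-kernel of a sequence `x`: all subsequences `(x (k^e * n + b))_n` with `b < k^e`. -/
def kernelSeq {S : Type*} (k : ℕ) (x : ℕ → S) : Set (ℕ → S) :=
  {y | ∃ e b : ℕ, b < k ^ e ∧ y = fun n => x (k ^ e * n + b)}

/-- The fixed point starting with `a` of the 2-uniform morphism sending each letter
`x` to the two-letter word `mu x` (assuming `(mu a).1 = a`):
the unique infinite word `w` with `w 0 = a`, `w (2n) = (mu (w n)).1`,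
`w (2n+1) = (mu (w n)).2`. -/
def fixedPoint2 {A : Type*} (mu : A → A × A) (a : A) : ℕ → A
  | 0 => a
  | n + 1 =>
    if (n + 1) % 2 = 0 then (mu (fixedPoint2 mu a ((n + 1) / 2))).1
    else (mu (fixedPoint2 mu a ((n + 1) / 2))).2
termination_by n => n
decreasing_by all_goals exact Nat.div_lt_self (Nat.succ_pos n) one_lt_two

/-- The morphism `φ_pf` on `{a, b, c, d}` (encoded as `0, 1, 2, 3`):
`a ↦ ab`, `b ↦ cb`, `c ↦ ad`, `d ↦ cd`. -/
def phiPF : Fin 4 → Fin 4 × Fin 4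
  | 0 => (0, 1)
  | 1 => (2, 1)
  | 2 => (0, 3)
  | 3 => (2, 3)

/-- The fixed point `v = φ_pf^ω(a)`. -/
def vPF : ℕ → Fin 4 := fixedPoint2 phiPF 0

/-- The coding `ψ : a, b ↦ 0`, `c, d ↦ 1`. -/
def codingPF (x : Fin 4) : Fin 2 := if (x : ℕ) < 2 then 0 else 1

/-- The paperfolding word `u_pf = ψ(φ_pf^ω(a)) = 0010011000110110⋯`. -/
def paperfolding (n : ℕ) : Fin 2 := codingPF (vPF n)

/-!
Palindromes in the paperfolding word `u` have length at most `13`. Using `u (2m + 1) = u m`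
and `u (2m) ≡ m (mod 2)`: a palindrome of length `8` pairs odd with even positions and so
forces an alternating factor of length `4`, impossible as `u (2m) ≠ u (2m + 2)`; one of length
`15` either compares `u (2m)` with `u (2m + 14)` or halves to one of length `8`; and any longer
palindrome has a central factor of length `8` or `15`.

Hence `PPL (n + 1) = 1 + min PPL (n + 1 - ℓ)` over the palindromic suffixes of length
`ℓ ≤ 13`, so the last `13` letters together with the increments `PPL (n - k) - PPL n` for
`k < 13` (which are bounded) form a finite state updated by reading one letter. For a
finite-state transducer reading the fixed point `v` of a `2`-uniform morphism, the state at
`2 ^ e * n + c` is a function of `v n` applied to the state reached by reading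
`v 0 ⋯ v (n - 1)` with one of finitely many transition functions, so the output has a finite
`2`-kernel.
-/

section Words

variable {A : Type*} {u : ℕ → A}

theorem wordPrefix_append_wordFactor (u : ℕ → A) (m ℓ : ℕ) :
    wordPrefix u m ++ wordFactor u m ℓ = wordPrefix u (m + ℓ) := by
  simp [wordPrefix, wordFactor, List.ofFn_add]

theorem isPalindrome_wordFactor_iff {i ℓ : ℕ} :
    IsPalindrome (wordFactor u i ℓ) ↔ ∀ j < ℓ, u (i + j) = u (i + (ℓ - 1 - j)) := by
  simp only [IsPalindrome, List.ext_getElem_iff, List.length_reverse, List.getElem_reverse,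
    wordFactor, List.length_ofFn, List.getElem_ofFn, true_and]
  exact ⟨fun h j hj => (h j hj hj).symm, fun h j hj _ => (h j hj).symm⟩

theorem IsPalindrome.wordFactor_inner {i ℓ k : ℕ}
    (h : IsPalindrome (wordFactor u i (ℓ + 2 * k))) :
    IsPalindrome (wordFactor u (i + k) ℓ) := by
  rw [isPalindrome_wordFactor_iff] at h ⊢
  intro j hj
  convert h (k + j) (by omega) using 2 <;> omega

end Words

section PalindromicLength

variable {A : Type*} {u : ℕ → A}

theorem isPalConcat_length (w : List A) : IsPalConcat w w.length := by
  refine ⟨w.map fun a => [a], by simp, ?_, List.flatMap_singleton' w⟩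
  simp [IsPalindrome]

theorem IsPalConcat.append {w p : List A} {k : ℕ} (h : IsPalConcat w k) (hp : p ≠ [])
    (hpal : IsPalindrome p) : IsPalConcat (w ++ p) (k + 1) := by
  obtain ⟨ps, hlen, hps, rfl⟩ := h
  refine ⟨ps ++ [p], by simp [hlen], ?_, by simp⟩
  simp only [List.mem_append, List.mem_singleton]
  rintro q (hq | rfl)
  exacts [hps q hq, ⟨hp, hpal⟩]

theorem isPalConcat_PPL (u : ℕ → A) (n : ℕ) : IsPalConcat (wordPrefix u n) (PPL u n) :=
  Nat.sInf_mem (s := {k | IsPalConcat (wordPrefix u n) k}) ⟨_, isPalConcat_length _⟩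

theorem PPL_le_of_isPalConcat {n k : ℕ} (h : IsPalConcat (wordPrefix u n) k) : PPL u n ≤ k :=
  Nat.sInf_le h

theorem PPL_add_le_of_isPalindrome {m ℓ : ℕ} (h : IsPalindrome (wordFactor u m ℓ)) :
    PPL u (m + ℓ) ≤ PPL u m + 1 := by
  rcases Nat.eq_zero_or_pos ℓ with rfl | hℓ
  · exact Nat.le_succ _
  apply PPL_le_of_isPalConcat
  rw [← wordPrefix_append_wordFactor]
  refine (isPalConcat_PPL u m).append ?_ h
  rw [← List.length_pos_iff, wordFactor, List.length_ofFn]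
  exact hℓ

theorem PPL_add_le (u : ℕ → A) (m j : ℕ) : PPL u (m + j) ≤ PPL u m + j := by
  induction j with
  | zero => rfl
  | succ j ih =>
    have hletter : IsPalindrome (wordFactor u (m + j) 1) := by simp [IsPalindrome, wordFactor]
    have := PPL_add_le_of_isPalindrome hletter
    rw [← add_assoc]
    omega

/-- The last palindrome of an optimal factorization of the prefix of length `n + 1`. -/
theorem exists_PPL_succ_eq (u : ℕ → A) (n : ℕ) :
    ∃ m ℓ, 0 < ℓ ∧ m + ℓ = n + 1 ∧ IsPalindrome (wordFactor u m ℓ) ∧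
      PPL u (n + 1) = PPL u m + 1 := by
  obtain ⟨ps, hlen, hps, hflat⟩ := isPalConcat_PPL u (n + 1)
  rcases ps.eq_nil_or_concat' with rfl | ⟨qs, p, rfl⟩
  · simpa [wordPrefix] using congrArg List.length hflat.symm
  obtain ⟨hp, hpal⟩ := hps p (by simp)
  set m := qs.flatten.length
  have hmn : m < n + 1 := by
    have := congrArg List.length hflat
    have := List.length_pos_iff.mpr hp
    simp only [List.flatten_append, List.flatten_singleton, List.length_append, wordPrefix,
      List.length_ofFn] at *
    omega
  rw [List.flatten_append, List.flatten_singleton, ← Nat.add_sub_of_le hmn.le,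
    ← wordPrefix_append_wordFactor] at hflat
  obtain ⟨hqs, rfl⟩ := List.append_inj hflat (by simp [m, wordPrefix])
  refine ⟨m, n + 1 - m, by omega, by omega, hpal, le_antisymm ?_ ?_⟩
  · have := PPL_add_le_of_isPalindrome hpal
    rwa [Nat.add_sub_of_le hmn.le] at this
  · have : PPL u m ≤ qs.length :=
      PPL_le_of_isPalConcat ⟨qs, rfl, fun q hq => hps q (by simp [hq]), hqs⟩
    simp only [List.length_append, List.length_singleton] at hlen
    omega

theorem PPL_le_PPL_add_of_palindrome_le {L : ℕ}
    (hL : ∀ i ℓ, IsPalindrome (wordFactor u i ℓ) → ℓ ≤ L) {m n : ℕ} (hmn : m ≤ n) :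
    PPL u m ≤ PPL u n + L := by
  induction n using Nat.strong_induction_on generalizing m with
  | _ n ih =>
  rcases n with _ | n
  · obtain rfl : m = 0 := by omega
    omega
  obtain ⟨i, ℓ, hℓ, hiℓ, hpal, heq⟩ := exists_PPL_succ_eq u n
  have hℓL := hL _ _ hpal
  rcases le_or_gt i m with him | hmi
  · have := PPL_add_le u i (m - i)
    rw [Nat.add_sub_cancel' him] at this
    omega
  · have := ih i (by omega) hmi.le
    omega

end PalindromicLength

section PalindromicLengthState

variable {A : Type*} {u : ℕ → A} {L : ℕ}

/-- The state of a transducer computing `PPLdiff u` when palindromes in `u` have length at most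
`L`: the last `L` letters read (`none` before the start of the word) and the last `L`
increments of `PPL u`. -/
noncomputable def pplState (L : ℕ) (u : ℕ → A) (n : ℕ) (k : Fin L) : Option A × ℤ :=
  (if (k : ℕ) < n then some (u (n - 1 - k)) else none, (PPL u (n - k) : ℤ) - PPL u n)

theorem pplState_succ_fst (n k : ℕ) (hk : k + 1 < L) :
    (pplState L u (n + 1) ⟨k + 1, hk⟩).1 = (pplState L u n ⟨k, by omega⟩).1 := by
  simp only [pplState, Nat.add_lt_add_iff_right, show n + 1 - 1 - (k + 1) = n - 1 - k by omega]

theorem pplState_succ_snd (n k : ℕ) (hk : k + 1 < L) :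
    (pplState L u (n + 1) ⟨k + 1, hk⟩).2 =
      (pplState L u n ⟨k, by omega⟩).2 - PPLdiff u n := by
  simp only [pplState, PPLdiff, Nat.add_sub_add_right]
  ring

theorem wordFactor_eq_of_pplState_eq {n m ℓ : ℕ} (hs : pplState L u n = pplState L u m)
    (hu : u n = u m) (hℓL : ℓ ≤ L) (hℓn : ℓ ≤ n + 1) :
    ℓ ≤ m + 1 ∧ wordFactor u (n + 1 - ℓ) ℓ = wordFactor u (m + 1 - ℓ) ℓ := by
  have hwin (k : ℕ) (hk : k < L) := congrArg Prod.fst (congrFun hs ⟨k, hk⟩)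
  simp only [pplState] at hwin
  have hℓm : ℓ ≤ m + 1 := by
    by_contra! h
    have := hwin (ℓ - 2) (by omega)
    rw [if_pos (by omega), if_neg (by omega)] at this
    exact Option.some_ne_none _ this
  refine ⟨hℓm, List.ofFn_inj.mpr (funext fun ⟨j, hj⟩ => ?_)⟩
  rcases (by omega : j = ℓ - 1 ∨ j < ℓ - 1) with rfl | hj'
  · rwa [show n + 1 - ℓ + (ℓ - 1) = n by omega, show m + 1 - ℓ + (ℓ - 1) = m by omega]
  · have := hwin (ℓ - 2 - j) (by omega)
    rw [if_pos (by omega), if_pos (by omega), Option.some_inj] at this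
    show u (n + 1 - ℓ + j) = u (m + 1 - ℓ + j)
    convert this using 2 <;> omega

theorem PPLdiff_le_of_pplState_eq (hL : ∀ i ℓ, IsPalindrome (wordFactor u i ℓ) → ℓ ≤ L)
    {n m : ℕ} (hs : pplState L u n = pplState L u m) (hu : u n = u m) :
    PPLdiff u m ≤ PPLdiff u n := by
  obtain ⟨i, ℓ, hℓ, hiℓ, hpal, heq⟩ := exists_PPL_succ_eq u n
  have hℓL := hL _ _ hpal
  obtain ⟨hℓm, hfac⟩ := wordFactor_eq_of_pplState_eq hs hu hℓL (by omega)
  rw [show n + 1 - ℓ = i by omega] at hfac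
  have hle := PPL_add_le_of_isPalindrome (hfac ▸ hpal)
  have hτ := congrArg Prod.snd (congrFun hs ⟨ℓ - 1, by omega⟩)
  simp only [pplState, show n - (ℓ - 1) = i by omega] at hτ
  rw [show m + 1 - ℓ + ℓ = m + 1 by omega, show m + 1 - ℓ = m - (ℓ - 1) by omega] at hle
  unfold PPLdiff
  omega

theorem pplState_succ_eq_of_eq (hL : ∀ i ℓ, IsPalindrome (wordFactor u i ℓ) → ℓ ≤ L)
    {n m : ℕ} (hs : pplState L u n = pplState L u m) (hu : u n = u m) :
    pplState L u (n + 1) = pplState L u (m + 1) := by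
  have hdiff : PPLdiff u n = PPLdiff u m :=
    le_antisymm (PPLdiff_le_of_pplState_eq hL hs.symm hu.symm) (PPLdiff_le_of_pplState_eq hL hs hu)
  funext ⟨k, hk⟩
  rcases k with _ | k
  · simp [pplState, hu]
  · ext
    · rw [pplState_succ_fst, pplState_succ_fst, hs]
    · rw [pplState_succ_snd, pplState_succ_snd, hs, hdiff]

theorem PPLdiff_eq_of_pplState_succ_eq (hL : 1 < L) {n m : ℕ}
    (hs : pplState L u (n + 1) = pplState L u (m + 1)) : PPLdiff u n = PPLdiff u m := by
  have := congrArg Prod.snd (congrFun hs ⟨1, hL⟩)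
  simp only [pplState, Nat.add_sub_cancel] at this
  unfold PPLdiff
  omega

theorem finite_range_pplState [Finite A]
    (hL : ∀ i ℓ, IsPalindrome (wordFactor u i ℓ) → ℓ ≤ L) :
    (Set.range (pplState L u)).Finite := by
  refine (Set.Finite.pi fun _ => Set.finite_univ.prod (Set.finite_Icc (-L : ℤ) L)).subset ?_
  rintro _ ⟨n, rfl⟩
  simp only [Set.mem_univ_pi, Set.mem_prod, Set.mem_univ, Set.mem_Icc, true_and]
  intro ⟨k, hk⟩
  have hlow := PPL_add_le u (n - k) (n - (n - k))
  have hup := PPL_le_PPL_add_of_palindrome_le hL (Nat.sub_le n k)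
  rw [Nat.add_sub_cancel' (Nat.sub_le n k)] at hlow
  simp only [pplState]
  omega

end PalindromicLengthState

section UniformMorphism

variable {A : Type*} (mu : A → A × A) (a : A)

theorem fixedPoint2_two_mul (ha : (mu a).1 = a) (n : ℕ) :
    fixedPoint2 mu a (2 * n) = (mu (fixedPoint2 mu a n)).1 := by
  rcases n with _ | n
  · rw [fixedPoint2, ha]
  · rw [show 2 * (n + 1) = 2 * n + 1 + 1 by ring, fixedPoint2, if_pos (by omega),
      show (2 * n + 1 + 1) / 2 = n + 1 by omega]

theorem fixedPoint2_two_mul_add_one (n : ℕ) :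
    fixedPoint2 mu a (2 * n + 1) = (mu (fixedPoint2 mu a n)).2 := by
  rw [fixedPoint2, if_neg (by omega), show (2 * n + 1) / 2 = n by omega]

end UniformMorphism

section Transducer

variable {A Q S : Type*} {mu : A → A × A} {w : ℕ → A}

def runPrefix (H : A → Q → Q) (w : ℕ → A) : ℕ → Q → Q
  | 0 => id
  | n + 1 => H (w n) ∘ runPrefix H w n

theorem eq_runPrefix {δ : A → Q → Q} {s : ℕ → Q} (hs : ∀ n, s (n + 1) = δ (w n) (s n))
    (n : ℕ) : s n = runPrefix δ w n (s 0) := by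
  induction n with
  | zero => rfl
  | succ n ih => rw [hs, ih]; rfl

theorem runPrefix_two_mul (hw0 : ∀ n, w (2 * n) = (mu (w n)).1)
    (hw1 : ∀ n, w (2 * n + 1) = (mu (w n)).2) (H : A → Q → Q) (n : ℕ) :
    runPrefix (fun x => H (mu x).2 ∘ H (mu x).1) w n = runPrefix H w (2 * n) := by
  induction n with
  | zero => rfl
  | succ n ih =>
    rw [show 2 * (n + 1) = 2 * n + 1 + 1 by ring]
    simp only [runPrefix, ih, hw0, hw1, Function.comp_assoc]

theorem exists_runPrefix_two_pow_mul_add (hw0 : ∀ n, w (2 * n) = (mu (w n)).1)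
    (hw1 : ∀ n, w (2 * n + 1) = (mu (w n)).2) {δ : A → Q → Q} {s : ℕ → Q}
    (hs : ∀ n, s (n + 1) = δ (w n) (s n)) (e : ℕ) :
    ∀ c ≤ 2 ^ e, ∃ H g : A → Q → Q,
      ∀ n, s (2 ^ e * n + c) = g (w n) (runPrefix H w n (s 0)) := by
  induction e with
  | zero =>
    intro c hc
    interval_cases c
    · exact ⟨δ, fun _ => id, fun n => by simpa using eq_runPrefix hs n⟩
    · exact ⟨δ, δ, fun n => by rw [pow_zero, one_mul, hs, eq_runPrefix hs n]⟩
  | succ e ih =>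
    intro c hc
    rcases le_or_gt c (2 ^ e) with hce | hce
    · obtain ⟨H, g, hHg⟩ := ih c hce
      refine ⟨fun x => H (mu x).2 ∘ H (mu x).1, fun x => g (mu x).1, fun n => ?_⟩
      calc s (2 ^ (e + 1) * n + c) = s (2 ^ e * (2 * n) + c) := by rw [pow_succ, mul_assoc]
        _ = g (w (2 * n)) (runPrefix H w (2 * n) (s 0)) := hHg _
        _ = _ := by rw [hw0, runPrefix_two_mul hw0 hw1]
    · obtain ⟨c, rfl⟩ := Nat.exists_eq_add_of_lt hce
      obtain ⟨H, g, hHg⟩ := ih (c + 1) (by rw [pow_succ] at hc; omega)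
      refine ⟨fun x => H (mu x).2 ∘ H (mu x).1, fun x => g (mu x).2 ∘ H (mu x).1,
        fun n => ?_⟩
      calc s (2 ^ (e + 1) * n + (2 ^ e + c + 1)) = s (2 ^ e * (2 * n + 1) + (c + 1)) := by ring_nf
        _ = g (w (2 * n + 1)) (H (w (2 * n)) (runPrefix H w (2 * n) (s 0))) := hHg _
        _ = _ := by rw [hw0, hw1, runPrefix_two_mul hw0 hw1]; rfl

theorem kernelSeq_finite_of_transducer [Finite A] [Finite Q]
    (hw0 : ∀ n, w (2 * n) = (mu (w n)).1) (hw1 : ∀ n, w (2 * n + 1) = (mu (w n)).2)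
    {s : ℕ → Q} (hs : ∀ n m, s n = s m → w n = w m → s (n + 1) = s (m + 1))
    {x : ℕ → S} (hx : ∀ n m, s (n + 1) = s (m + 1) → x n = x m) :
    (kernelSeq 2 x).Finite := by
  have : Nonempty Q := ⟨s 0⟩
  have : Nonempty S := ⟨x 0⟩
  obtain ⟨δ, hδ⟩ := (Function.factorsThrough_iff fun n => s (n + 1)).mp
    fun n m (h : (w n, s n) = (w m, s m)) => hs n m (congrArg Prod.snd h) (congrArg Prod.fst h)
  obtain ⟨out, hout⟩ := (Function.factorsThrough_iff x).mp hx
  refine (Set.finite_range fun Hg : (A → Q → Q) × (A → Q → Q) =>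
    fun n => out (Hg.2 (w n) (runPrefix Hg.1 w n (s 0)))).subset ?_
  rintro _ ⟨e, b, hb, rfl⟩
  obtain ⟨H, g, hHg⟩ := exists_runPrefix_two_pow_mul_add hw0 hw1 (δ := fun a q => δ (a, q))
    (fun n => congrFun hδ n) e (b + 1) hb
  exact ⟨(H, g), funext fun n => by simp only [hout, Function.comp_apply, add_assoc, hHg]⟩

theorem kernelSeq_finite_of_transducer_of_finite_range [Finite A]
    (hw0 : ∀ n, w (2 * n) = (mu (w n)).1) (hw1 : ∀ n, w (2 * n + 1) = (mu (w n)).2)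
    {s : ℕ → Q} (hfin : (Set.range s).Finite)
    (hs : ∀ n m, s n = s m → w n = w m → s (n + 1) = s (m + 1))
    {x : ℕ → S} (hx : ∀ n m, s (n + 1) = s (m + 1) → x n = x m) :
    (kernelSeq 2 x).Finite :=
  have := hfin.to_subtype
  kernelSeq_finite_of_transducer (s := Set.rangeFactorization s) hw0 hw1
    (fun n m h hw => Subtype.ext (hs n m (congrArg Subtype.val h) hw))
    (fun n m h => hx n m (congrArg Subtype.val h))

end Transducer

section Paperfolding

theorem paperfolding_of_odd {n : ℕ} (hn : n % 2 = 1) : paperfolding n = paperfolding (n / 2) := by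
  obtain ⟨k, rfl⟩ : ∃ k, n = 2 * k + 1 := ⟨n / 2, by omega⟩
  rw [show (2 * k + 1) / 2 = k by omega]
  unfold paperfolding vPF
  rw [fixedPoint2_two_mul_add_one]
  generalize fixedPoint2 phiPF 0 k = x
  fin_cases x <;> rfl

theorem paperfolding_val_of_even {n : ℕ} (hn : n % 2 = 0) :
    (paperfolding n : ℕ) = n / 2 % 2 := by
  obtain ⟨k, rfl⟩ : ∃ k, n = 2 * k := ⟨n / 2, by omega⟩
  rw [Nat.mul_div_cancel_left _ two_pos]
  unfold paperfolding vPF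
  obtain ⟨j, rfl | rfl⟩ := Nat.even_or_odd' k
  · rw [show 2 * j % 2 = 0 by omega, fixedPoint2_two_mul _ _ rfl, fixedPoint2_two_mul _ _ rfl]
    generalize fixedPoint2 phiPF 0 j = x
    fin_cases x <;> rfl
  · rw [show (2 * j + 1) % 2 = 1 by omega, fixedPoint2_two_mul _ _ rfl,
      fixedPoint2_two_mul_add_one]
    generalize fixedPoint2 phiPF 0 j = x
    fin_cases x <;> rfl

theorem paperfolding_not_alternating (n c : ℕ) :
    ¬ ∀ t < 4, (paperfolding (n + t) : ℕ) = (c + t) % 2 := by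
  intro h
  rcases Nat.mod_two_eq_zero_or_one n with hn | hn
  · have h0 := h 0 (by norm_num)
    have h2 := h 2 (by norm_num)
    rw [paperfolding_val_of_even (by omega)] at h0 h2
    omega
  · have h1 := h 1 (by norm_num)
    have h3 := h 3 (by norm_num)
    rw [paperfolding_val_of_even (by omega)] at h1 h3
    omega

theorem paperfolding_not_isPalindrome_eight (i : ℕ) :
    ¬ IsPalindrome (wordFactor paperfolding i 8) := by
  rw [isPalindrome_wordFactor_iff]
  intro h
  apply paperfolding_not_alternating (i / 2) (i / 2 + 3 + i % 2)
  intro t ht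
  have hj := h (2 * t + 1 - i % 2) (by omega)
  rw [paperfolding_of_odd (by omega), show (i + (2 * t + 1 - i % 2)) / 2 = i / 2 + t by omega] at hj
  rw [hj, paperfolding_val_of_even (by omega)]
  omega

theorem paperfolding_not_isPalindrome_fifteen (i : ℕ) :
    ¬ IsPalindrome (wordFactor paperfolding i 15) := by
  rw [isPalindrome_wordFactor_iff]
  intro h
  rcases Nat.mod_two_eq_zero_or_one i with hi | hi
  · have h0 := congrArg Fin.val (h 0 (by norm_num))
    rw [paperfolding_val_of_even (by omega), paperfolding_val_of_even (by omega)] at h0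
    omega
  · apply paperfolding_not_isPalindrome_eight (i / 2)
    rw [isPalindrome_wordFactor_iff]
    intro j hj
    have hj := h (2 * j) (by omega)
    rwa [paperfolding_of_odd (n := i + 2 * j) (by omega),
      paperfolding_of_odd (n := i + (15 - 1 - 2 * j)) (by omega),
      show (i + 2 * j) / 2 = i / 2 + j by omega,
      show (i + (15 - 1 - 2 * j)) / 2 = i / 2 + (8 - 1 - j) by omega] at hj

theorem paperfolding_palindrome_length_le (i ℓ : ℕ)
    (h : IsPalindrome (wordFactor paperfolding i ℓ)) : ℓ ≤ 13 := by
  by_contra! hℓ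
  obtain ⟨k, rfl | rfl⟩ := Nat.even_or_odd' ℓ
  · rw [show 2 * k = 8 + 2 * (k - 4) by omega] at h
    exact paperfolding_not_isPalindrome_eight _ h.wordFactor_inner
  · rw [show 2 * k + 1 = 15 + 2 * (k - 7) by omega] at h
    exact paperfolding_not_isPalindrome_fifteen _ h.wordFactor_inner

end Paperfolding

/-- The PPL-difference sequence of the paperfolding word is 2-automatic:
its 2-kernel is finite. -/
theorem paperfolding_ppl_diff_automatic :
    (kernelSeq 2 (PPLdiff paperfolding)).Finite :=
  kernelSeq_finite_of_transducer_of_finite_range (fixedPoint2_two_mul phiPF 0 rfl)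
    (fixedPoint2_two_mul_add_one phiPF 0)
    (finite_range_pplState (L := 13) paperfolding_palindrome_length_le)
    (fun _ _ hs hw => pplState_succ_eq_of_eq paperfolding_palindrome_length_le hs
      (congrArg codingPF hw))
    (fun _ _ => PPLdiff_eq_of_pplState_succ_eq (by norm_num))
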